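/- arXiv:2403.13937 — 5 statements merged into one kernel-verified Lean document; each statement's English description precedes it below -/
import Mathlib

section
/- The number of non-crossing trees with n nodes, j left edges, and n-1-j right edges equals (1/(n-1)) * C(n-2+j, j) * C(2n-2-j, n-2-j), where this quantity is a nonnegative integer for all n ≥ 2 and 0 ≤ j ≤ n-2. Equivalently, (n-1) divides C(n-2+j, j) * C(2n-2-j, n-2-j). -/
/-- Key subtraction-free divisibility: `(j+k+1) ∣ C(2j+k, j) * C(j+2k+2, k)`. -/
theorem noncrossing_aux (j k : ℕ) :
    (j + k + 1) ∣ Nat.choose (2 * j + k) j * Nat.choose (j + 2 * k + 2) k := by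
  match j, k with
  | 0, k =>
      -- goal : (k+1) ∣ C(k, 0) * C(2k+2, k)
      simp only [Nat.zero_add, Nat.mul_zero, Nat.choose_zero_right, Nat.one_mul]
      -- (k+1) ∣ C(2k+2, k)
      have h1 : Nat.choose (2 * k + 2) (k + 1) * (k + 1) =
          Nat.choose (2 * k + 2) k * (k + 2) := by
        have h := Nat.choose_succ_right_eq (2 * k + 2) k
        have e : 2 * k + 2 - k = k + 2 := by omega
        rw [e] at h
        exact h
      have h2 : (k + 2) ∣ Nat.choose (2 * k + 2) (k + 1) := by
        have := Nat.succ_dvd_centralBinom (k + 1)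
        simpa [Nat.centralBinom, Nat.mul_add, Nat.mul_succ] using this
      have hco : Nat.Coprime (k + 1) (k + 2) := by
        have : k + 2 = (k + 1) + 1 := rfl
        rw [this]
        exact (Nat.coprime_self_add_right (m := k + 1) (n := 1)).mpr (Nat.coprime_one_right _)
      have : (k + 1) ∣ Nat.choose (2 * k + 2) k * (k + 2) := by
        rw [← h1]; exact Dvd.intro_left _ rfl
      exact (Nat.Coprime.dvd_of_dvd_mul_right hco this)
  | j + 1, 0 =>
      -- goal : (j+2) ∣ C(2(j+1), j+1) * C(j+3, 0) = centralBinom (j+1)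
      have := Nat.succ_dvd_centralBinom (j + 1)
      simpa [Nat.centralBinom, Nat.two_mul, Nat.mul_add, Nat.mul_succ] using this
  | i + 1, l + 1 =>
      -- general case, all quantities subtraction-free
      set A := Nat.choose (2 * i + l + 3) (i + 1) with hA
      set R := Nat.choose (2 * i + l + 3) i with hR
      set P := Nat.choose (i + 2 * l + 4) (l + 1) with hP
      set Q := Nat.choose (i + 2 * l + 4) l with hQ
      set B := Nat.choose (i + 2 * l + 5) (l + 1) with hB
      have h1 : A * (i + 1) = R * (i + l + 3) := by
        have h := Nat.choose_succ_right_eq (2 * i + l + 3) i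
        have e : 2 * i + l + 3 - i = i + l + 3 := by omega
        rw [e] at h
        rw [hA, hR]; exact h
      have h2 : P * (l + 1) = Q * (i + l + 4) := by
        have h := Nat.choose_succ_right_eq (i + 2 * l + 4) l
        have e : i + 2 * l + 4 - l = i + l + 4 := by omega
        rw [e] at h
        rw [hP, hQ]; exact h
      have h3 : B = Q + P := by
        rw [hB, hQ, hP]
        have : i + 2 * l + 5 = (i + 2 * l + 4) + 1 := by ring
        rw [this, Nat.choose_succ_succ]
      -- pass to ℤ
      have hgoal : ((i + 1 + (l + 1) + 1 : ℕ) : ℤ) ∣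
          ((Nat.choose (2 * (i + 1) + (l + 1)) (i + 1) *
            Nat.choose ((i + 1) + 2 * (l + 1) + 2) (l + 1) : ℕ) : ℤ) := by
        have e1 : 2 * (i + 1) + (l + 1) = 2 * i + l + 3 := by ring
        have e2 : (i + 1) + 2 * (l + 1) + 2 = i + 2 * l + 5 := by ring
        rw [e1, e2]
        push_cast
        refine ⟨((A : ℤ) - R) * P - A * Q, ?_⟩
        have h1' : (A : ℤ) * (i + 1) = R * (i + l + 3) := by exact_mod_cast h1
        have h2' : (P : ℤ) * (l + 1) = Q * (i + l + 4) := by exact_mod_cast h2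
        have h3' : (B : ℤ) = Q + P := by exact_mod_cast h3
        have : ((i:ℤ) + 1 + (l + 1) + 1) = (i + l + 3 : ℤ) := by ring
        rw [this, h3']
        linear_combination (-(P : ℤ)) * h1' - (A : ℤ) * h2'
      exact_mod_cast hgoal

/-- The number of non-crossing trees with `n` nodes, `j` left edges and `n-1-j` right
edges is `(1/(n-1)) C(n-2+j, j) C(2n-2-j, n-2-j)`; in particular `n-1` divides the
product of the two binomial coefficients. -/
theorem noncrossing_refined_integral (n j : ℕ) (hn : 2 ≤ n) (hj : j ≤ n - 2) :
    (n - 1) ∣ Nat.choose (n - 2 + j) j * Nat.choose (2 * n - 2 - j) (n - 2 - j) := by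
  obtain ⟨k, hk⟩ : ∃ k, n = j + k + 2 := ⟨n - 2 - j, by omega⟩
  subst hk
  have e1 : j + k + 2 - 2 + j = 2 * j + k := by omega
  have e2 : 2 * (j + k + 2) - 2 - j = j + 2 * k + 2 := by omega
  have e3 : j + k + 2 - 2 - j = k := by omega
  have e4 : j + k + 2 - 1 = j + k + 1 := by omega
  rw [e1, e2, e3, e4]
  exact noncrossing_aux j k
end

section
/- Summing the refined counts over j recovers the total number of non-crossing trees: sum over j from 0 to n-2 of (1/(n-1)) C(n-2+j,j) C(2n-2-j,n-2-j) equals (1/(2n-1)) C(3n-3, n-1). -/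
/-- Hockey stick in the "upper" form: `∑_{j=0}^{r} C(j+b, j) = C(r+b+1, r)`. -/
lemma hockey (b r : ℕ) :
    ∑ j ∈ Finset.range (r + 1), (j + b).choose j = (r + b + 1).choose r := by
  induction r with
  | zero => simp
  | succ r ih =>
    rw [Finset.sum_range_succ, ih, show r + 1 + b = r + b + 1 by ring]
    exact (Nat.choose_succ_succ' (r + b + 1) r).symm

/-- Vandermonde convolution with upper indices:
`∑_{k=0}^{r} C(k+a,k) C(r-k+b, r-k) = C(r+a+b+1, r)`. -/
lemma conv (b : ℕ) : ∀ a r : ℕ,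
    ∑ k ∈ Finset.range (r + 1), (k + a).choose k * ((r - k) + b).choose (r - k)
      = (r + a + b + 1).choose r := by
  intro a
  induction a with
  | zero =>
    intro r
    simp only [Nat.add_zero, Nat.choose_self, Nat.one_mul]
    have : ∑ k ∈ Finset.range (r + 1), ((r - k) + b).choose (r - k)
        = ∑ j ∈ Finset.range (r + 1), (j + b).choose j := by
      apply Finset.sum_nbij' (fun k => r - k) (fun j => r - j) <;>
        intro x hx <;> simp_all [Finset.mem_range] <;> omega
    rw [this, hockey]
  | succ a ih =>
    intro r
    induction r with
    | zero => simp
    | succ r ihr =>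
      rw [Finset.sum_range_succ']
      have e1 : ∀ j ∈ Finset.range (r + 1),
          (j + 1 + (a + 1)).choose (j + 1) * ((r + 1 - (j + 1)) + b).choose (r + 1 - (j + 1))
          = (j + (a + 1)).choose j * ((r - j) + b).choose (r - j)
            + (j + (a + 1)).choose (j + 1) * ((r - j) + b).choose (r - j) := by
        intro j hj
        rw [show r + 1 - (j + 1) = r - j by omega,
            show j + 1 + (a + 1) = (j + (a + 1)) + 1 by ring,
            Nat.choose_succ_succ' (j + (a + 1)) j]
        ring
      rw [Finset.sum_congr rfl e1, Finset.sum_add_distrib, ihr]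
      have e2 : ∑ x ∈ Finset.range (r + 1),
            (x + (a + 1)).choose (x + 1) * ((r - x) + b).choose (r - x)
          + (0 + (a + 1)).choose 0 * ((r + 1 - 0) + b).choose (r + 1 - 0)
          = (r + 1 + a + b + 1).choose (r + 1) := by
        rw [← ih (r + 1)]
        conv_rhs => rw [Finset.sum_range_succ']
        congr 1
        · apply Finset.sum_congr rfl
          intro j hj
          rw [show r + 1 - (j + 1) = r - j by omega, show j + 1 + a = j + (a + 1) by ring]
        · simp
      rw [add_assoc, e2, show r + (a + 1) + b + 1 = r + a + b + 2 by ring,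
          show r + 1 + a + b + 1 = r + a + b + 2 by ring,
          show r + 1 + (a + 1) + b + 1 = (r + a + b + 2) + 1 by ring]
      exact (Nat.choose_succ_succ' (r + a + b + 2) r).symm

/-- Summing the refined counts over `j` recovers the total number of non-crossing trees:
`∑_{j=0}^{n-2} (2n-1) C(n-2+j,j) C(2n-2-j,n-2-j) = (n-1) C(3n-3, n-1)`. -/
theorem noncrossing_sum (n : ℕ) (hn : 2 ≤ n) :
    ∑ j ∈ Finset.range (n - 1),
      (2 * n - 1) * Nat.choose (n - 2 + j) j * Nat.choose (2 * n - 2 - j) (n - 2 - j)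
      = (n - 1) * Nat.choose (3 * n - 3) (n - 1) := by
  obtain ⟨m, rfl⟩ : ∃ m, n = m + 2 := ⟨n - 2, by omega⟩
  have key : ∀ j ∈ Finset.range (m + 1),
      (2 * (m + 2) - 1) * Nat.choose (m + 2 - 2 + j) j
        * Nat.choose (2 * (m + 2) - 2 - j) (m + 2 - 2 - j)
      = (2 * m + 3) * ((j + m).choose j * ((m - j) + (m + 2)).choose (m - j)) := by
    intro j hj
    simp only [Finset.mem_range] at hj
    rw [show 2 * (m + 2) - 1 = 2 * m + 3 by omega, show m + 2 - 2 + j = j + m by omega,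
        show 2 * (m + 2) - 2 - j = (m - j) + (m + 2) by omega,
        show m + 2 - 2 - j = m - j by omega, mul_assoc]
  rw [show m + 2 - 1 = m + 1 by omega, Finset.sum_congr rfl key, ← Finset.mul_sum,
      conv (m + 2) m m, show m + m + (m + 2) + 1 = 3 * m + 3 by ring,
      show 3 * (m + 2) - 3 = 3 * m + 3 by omega]
  have h := Nat.choose_succ_right_eq (3 * m + 3) m
  rw [show 3 * m + 3 - m = 2 * m + 3 by omega] at h
  rw [mul_comm (m + 1), h]
  exact mul_comm _ _
end

section
/- For k ≥ 1 and nonnegative integers a_1, ..., a_k with a_1 + ... + a_k = n-1, the quantity (1/(n-1)) · C(n-2+a_1, a_1) ⋯ C(n-2+a_{k-1}, a_{k-1}) · C(n-1+a_k, a_k - 1) is a nonnegative integer, i.e., (n-1) divides the product C(n-2+a_1,a_1) ⋯ C(n-2+a_{k-1},a_{k-1}) C(n-1+a_k, a_k-1). -/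
/-- Absorption-type valuation lemma: `v_p m ≤ min (v_p m) (v_p b) + v_p (C (m+b-1) (m-1))`
for `m, b ≥ 1`. -/
private lemma lemA (p m b : ℕ) (hp : p.Prime) (hm : 1 ≤ m) (hb : 1 ≤ b) :
    m.factorization p ≤ min (m.factorization p) (b.factorization p)
      + ((m + b - 1).choose (m - 1)).factorization p := by
  rcases le_or_gt (m.factorization p) (b.factorization p) with h | h
  · simp [min_eq_left h]
  · have hm0 : m ≠ 0 := by omega
    have hb0 : b ≠ 0 := by omega
    have hmb0 : m + b ≠ 0 := by omega
    have hpv_b : p ^ b.factorization p ∣ b := Nat.ordProj_dvd b p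
    have hpv_m : p ^ b.factorization p ∣ m :=
      (Nat.Prime.pow_dvd_iff_le_factorization hp hm0).mpr (by omega)
    have hpv1_m : p ^ (b.factorization p + 1) ∣ m :=
      (Nat.Prime.pow_dvd_iff_le_factorization hp hm0).mpr (by omega)
    have hfmb : (m + b).factorization p = b.factorization p := by
      have h1 : p ^ b.factorization p ∣ m + b := dvd_add hpv_m hpv_b
      have h2 : ¬ p ^ (b.factorization p + 1) ∣ m + b := by
        intro hdvd
        have hd : p ^ (b.factorization p + 1) ∣ b := by
          have := Nat.dvd_sub hdvd hpv1_m
          simpa using this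
        have := (Nat.Prime.pow_dvd_iff_le_factorization hp hb0).mp hd
        omega
      have h1' := (Nat.Prime.pow_dvd_iff_le_factorization hp hmb0).mp h1
      have h2' : ¬ (b.factorization p + 1 ≤ (m + b).factorization p) :=
        fun hle => h2 ((Nat.Prime.pow_dvd_iff_le_factorization hp hmb0).mpr hle)
      omega
    have habs : (m + b) * Nat.choose (m + b - 1) (m - 1) = Nat.choose (m + b) m * m := by
      have h := Nat.add_one_mul_choose_eq (m + b - 1) (m - 1)
      have h1 : m + b - 1 + 1 = m + b := by omega
      have h2 : m - 1 + 1 = m := by omega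
      simp only [Nat.succ_eq_add_one, h1, h2] at h
      exact h
    have hc1 : Nat.choose (m + b) m ≠ 0 := (Nat.choose_pos (Nat.le_add_right m b)).ne'
    have hc2 : Nat.choose (m + b - 1) (m - 1) ≠ 0 := (Nat.choose_pos (by omega)).ne'
    have hfe := congrArg (fun x : ℕ => x.factorization p) habs
    simp only [Nat.factorization_mul hmb0 hc2, Nat.factorization_mul hc1 hm0,
      Finsupp.add_apply] at hfe
    omega

/-- For `k ≥ 1`, `n ≥ 2` and nonnegative integers `a₁ + ⋯ + a_k = n-1`, the number
`(1/(n-1)) C(n-2+a₁,a₁) ⋯ C(n-2+a_{k-1},a_{k-1}) C(n-1+a_k, a_k-1)` is a nonnegative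
integer, i.e. `n-1` divides the product (with the convention `C(m,-1) = 0`). -/
theorem kDyck_refined_integral (k n : ℕ) (hk : 1 ≤ k) (hn : 2 ≤ n) (a : Fin k → ℕ)
    (ha : ∑ i, a i = n - 1) :
    (n - 1) ∣
      (∏ i ∈ Finset.univ.filter (fun i : Fin k => (i : ℕ) < k - 1),
          Nat.choose (n - 2 + a i) (a i)) *
        (if a ⟨k - 1, by omega⟩ = 0 then 0
         else Nat.choose (n - 1 + a ⟨k - 1, by omega⟩) (a ⟨k - 1, by omega⟩ - 1)) := by
  have hklt : k - 1 < k := by omega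
  by_cases hA0 : a ⟨k - 1, hklt⟩ = 0
  · rw [if_pos hA0, mul_zero]
    exact dvd_zero _
  · rw [if_neg hA0]
    obtain ⟨m, rfl⟩ : ∃ m, n = m + 2 := ⟨n - 2, by omega⟩
    have e1 : m + 2 - 1 = m + 1 := by omega
    have e2 : m + 2 - 2 = m := by omega
    simp only [e1, e2] at ha ⊢
    set A := a ⟨k - 1, hklt⟩ with hAdef
    have hA1 : 1 ≤ A := by omega
    set S := Finset.univ.filter (fun i : Fin k => (i : ℕ) < k - 1) with hSdef
    have hPsymm : ∀ i ∈ S, Nat.choose (m + a i) (a i) = Nat.choose (m + a i) m := by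
      intro i _
      have := Nat.choose_symm (n := m + a i) (k := m) (Nat.le_add_right m (a i))
      simpa using this
    rw [Finset.prod_congr rfl hPsymm]
    have hLsymm : Nat.choose (m + 1 + A) (A - 1) = Nat.choose (m + 1 + A) (m + 2) := by
      have h := Nat.choose_symm (n := m + 1 + A) (k := m + 2) (by omega)
      have h' : m + 1 + A - (m + 2) = A - 1 := by omega
      rw [h'] at h
      exact h
    rw [hLsymm]
    set P := ∏ i ∈ S, Nat.choose (m + a i) m with hPdef
    have hP0 : P ≠ 0 := by
      rw [hPdef]
      exact (Finset.prod_pos fun i _ => Nat.choose_pos (Nat.le_add_right m (a i))).ne'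
    have hCbig0 : Nat.choose (m + 1 + A) (m + 2) ≠ 0 := (Nat.choose_pos (by omega)).ne'
    have hCsmall0 : Nat.choose (m + A) m ≠ 0 := (Nat.choose_pos (Nat.le_add_right m A)).ne'
    -- master identity
    have hId : (m + 1) * ((m + 2) * Nat.choose (m + 1 + A) (m + 2))
        = A * ((m + 1 + A) * Nat.choose (m + A) m) := by
      have h1 := Nat.add_one_mul_choose_eq (m + A) (m + 1)
      have h2 := Nat.choose_succ_right_eq (m + A) m
      simp only [Nat.add_sub_cancel_left] at h2
      have e3 : m + 1 + A = m + A + 1 := by omega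
      rw [e3]
      calc (m + 1) * ((m + 2) * Nat.choose (m + A + 1) (m + 2))
          = (m + 1) * (Nat.choose (m + A + 1) (m + 2) * (m + 2)) := by ring
        _ = (m + 1) * ((m + A + 1) * Nat.choose (m + A) (m + 1)) := by rw [← h1]
        _ = (m + A + 1) * (Nat.choose (m + A) (m + 1) * (m + 1)) := by ring
        _ = (m + A + 1) * (Nat.choose (m + A) m * A) := by rw [h2]
        _ = A * ((m + A + 1) * Nat.choose (m + A) m) := by ring
    -- sum split: ∑_{i ∈ S} a i + A = m + 1
    have hsplit : ∑ i ∈ S, a i + A = m + 1 := by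
      have hnot : Finset.univ.filter (fun i : Fin k => ¬ (i : ℕ) < k - 1)
          = {(⟨k - 1, hklt⟩ : Fin k)} := by
        ext i
        simp only [Finset.mem_filter, Finset.mem_univ, true_and, Finset.mem_singleton,
          Fin.ext_iff, not_lt]
        have := i.isLt
        omega
      have h := Finset.sum_filter_add_sum_filter_not Finset.univ
        (fun i : Fin k => (i : ℕ) < k - 1) a
      rw [hnot, Finset.sum_singleton, ha] at h
      rw [← hSdef, ← hAdef] at h
      exact h
    -- reduce to factorization inequality
    rw [← Nat.factorization_le_iff_dvd (by omega) (mul_ne_zero hP0 hCbig0), Finsupp.le_def]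
    intro p
    by_cases hp : p.Prime
    · by_cases he : (m + 1).factorization p = 0
      · rw [he]
        exact Nat.zero_le _
      · have hA0' : A ≠ 0 := by omega
        -- v_p (m+2) = 0
        have hvm2 : (m + 2).factorization p = 0 := by
          apply Nat.factorization_eq_zero_of_not_dvd
          intro hd
          have hd1 : p ∣ m + 1 := by
            have : p ^ 1 ∣ m + 1 :=
              (Nat.Prime.pow_dvd_iff_le_factorization hp (by omega)).mpr (by omega)
            simpa using this
          have hone : p ∣ 1 := by
            have := Nat.dvd_sub hd hd1
            simpa using this
          exact Nat.Prime.one_lt hp |>.ne' (Nat.eq_one_of_dvd_one hone) |>.elim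
        -- factorization of master identity
        have hfe := congrArg (fun x : ℕ => x.factorization p) hId
        simp only [Nat.factorization_mul (show (m + 1 : ℕ) ≠ 0 by omega)
            (mul_ne_zero (show (m + 2 : ℕ) ≠ 0 by omega) hCbig0),
          Nat.factorization_mul (show (m + 2 : ℕ) ≠ 0 by omega) hCbig0,
          Nat.factorization_mul hA0' (mul_ne_zero (show (m + 1 + A : ℕ) ≠ 0 by omega) hCsmall0),
          Nat.factorization_mul (show (m + 1 + A : ℕ) ≠ 0 by omega) hCsmall0,
          Finsupp.add_apply] at hfe
        -- f ≤ v_p (m+1+A)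
        have hfA : p ^ min ((m + 1).factorization p) (A.factorization p) ∣ A :=
          (Nat.Prime.pow_dvd_iff_le_factorization hp hA0').mpr (min_le_right _ _)
        have hfm : p ^ min ((m + 1).factorization p) (A.factorization p) ∣ m + 1 :=
          (Nat.Prime.pow_dvd_iff_le_factorization hp (by omega)).mpr (min_le_left _ _)
        have h2 : min ((m + 1).factorization p) (A.factorization p)
            ≤ (m + 1 + A).factorization p :=
          (Nat.Prime.pow_dvd_iff_le_factorization hp (by omega)).mp (dvd_add hfm hfA)
        -- e ≤ f + v_p (C (m+A) m)
        have h3 : (m + 1).factorization p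
            ≤ min ((m + 1).factorization p) (A.factorization p)
              + (Nat.choose (m + A) m).factorization p := by
          have h := lemA p (m + 1) A hp (by omega) hA1
          have e4 : m + 1 + A - 1 = m + A := by omega
          have e5 : m + 1 - 1 = m := by omega
          rw [e4, e5] at h
          exact h
        -- e ≤ f + v_p P
        have h4 : (m + 1).factorization p
            ≤ min ((m + 1).factorization p) (A.factorization p) + P.factorization p := by
          rcases le_or_gt ((m + 1).factorization p) (A.factorization p) with hef | hef
          · omega
          · have hex : ∃ i ∈ S, ¬ p ^ (A.factorization p + 1) ∣ a i := by
              by_contra hall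
              push_neg at hall
              have hs : p ^ (A.factorization p + 1) ∣ ∑ i ∈ S, a i := Finset.dvd_sum hall
              have hm1 : p ^ (A.factorization p + 1) ∣ m + 1 :=
                (Nat.Prime.pow_dvd_iff_le_factorization hp (by omega)).mpr (by omega)
              have hAd : p ^ (A.factorization p + 1) ∣ A := by
                have hsub := Nat.dvd_sub hm1 hs
                have e6 : m + 1 - ∑ i ∈ S, a i = A := by omega
                rwa [e6] at hsub
              have := (Nat.Prime.pow_dvd_iff_le_factorization hp hA0').mp hAd
              omega
            obtain ⟨i0, hi0S, hi0d⟩ := hex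
            have hai0 : a i0 ≠ 0 := by
              intro h0
              exact hi0d (by simp [h0])
            have hvai : (a i0).factorization p ≤ A.factorization p := by
              by_contra hlt
              push_neg at hlt
              exact hi0d ((Nat.Prime.pow_dvd_iff_le_factorization hp hai0).mpr (by omega))
            have hlem := lemA p (m + 1) (a i0) hp (by omega) (by omega)
            have e7 : m + 1 + a i0 - 1 = m + a i0 := by omega
            have e8 : m + 1 - 1 = m := by omega
            rw [e7, e8] at hlem
            have hsingle : (Nat.choose (m + a i0) m).factorization p ≤ P.factorization p := by
              rw [hPdef, Nat.factorization_prod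
                (fun i _ => (Nat.choose_pos (Nat.le_add_right m (a i))).ne')]
              rw [Finset.sum_apply']
              exact Finset.single_le_sum (f := fun i => ((m + a i).choose m).factorization p)
                (fun i _ => Nat.zero_le _) hi0S
            omega
        rw [Nat.factorization_mul hP0 hCbig0, Finsupp.add_apply]
        omega
    · simp [Nat.factorization_eq_zero_of_not_prime _ hp]
end

section
/- Lagrange inversion for the k-butterfly: if v is the formal power series with v(0)=0 satisfying z = v(1-r_1 v)⋯(1-r_k v), then for n ≥ 2, (n-1)·[z^{n-1}] 1/(1-r_k v) = [v^{n-2}] r_k / ((1-r_1 v)^{n-1} ⋯ (1-r_{k-1} v)^{n-1} (1-r_k v)^{n+1}). -/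
open PowerSeries

/-- `(1 - r v)^{-m} = ∑_{a ≥ 0} C(m-1+a, a) r^a v^a` as a formal power series in `v`. -/
noncomputable def invPow {R : Type*} [CommSemiring R] (r : R) (m : ℕ) : PowerSeries R :=
  PowerSeries.mk fun a => (Nat.choose (m - 1 + a) a : R) * r ^ a

section Helpers
variable {R : Type*} [CommRing R]

lemma invPow_one_mul (r : R) : (1 - C r * X) * invPow r 1 = 1 := by
  ext a
  rcases a with _ | a
  · simp [invPow]
  · simp only [sub_mul, one_mul, map_sub, mul_assoc, coeff_C_mul, coeff_succ_X_mul, invPow,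
      coeff_mk, coeff_one]
    simp [pow_succ]
    ring

lemma invPow_succ_mul (r : R) (m : ℕ) (hm : 1 ≤ m) :
    (1 - C r * X) * invPow r (m + 1) = invPow r m := by
  ext a
  rcases a with _ | a
  · simp [invPow]
  · simp only [sub_mul, one_mul, map_sub, mul_assoc, coeff_C_mul, coeff_succ_X_mul, invPow,
      coeff_mk]
    have h1 : m + 1 - 1 + (a + 1) = (m + a) + 1 := by omega
    have h2 : m - 1 + (a + 1) = m + a := by omega
    rw [h1, h2, Nat.choose_succ_succ (m + a) a]
    push_cast
    ring

lemma invPow_mul_pow (r : R) (m : ℕ) (hm : 1 ≤ m) :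
    invPow r m * (1 - C r * X) ^ m = 1 := by
  obtain ⟨m, rfl⟩ : ∃ m', m = m' + 1 := ⟨m - 1, by omega⟩
  clear hm
  induction m with
  | zero => rw [pow_one, mul_comm]; exact invPow_one_mul r
  | succ m ih =>
      calc invPow r (m + 1 + 1) * (1 - C r * X) ^ (m + 1 + 1)
          = ((1 - C r * X) * invPow r (m + 1 + 1)) * (1 - C r * X) ^ (m + 1) := by ring
        _ = 1 := by rw [invPow_succ_mul r (m + 1) (by omega)]; exact ih

lemma coeff_X_pow_mul_zero (f : PowerSeries R) (j d : ℕ) (h : d < j) :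
    PowerSeries.coeff d (PowerSeries.X ^ j * f) = 0 := by
  rw [PowerSeries.coeff_mul]
  apply Finset.sum_eq_zero
  rintro ⟨a, b⟩ hab
  replace hab : a + b = d := Finset.HasAntidiagonal.mem_antidiagonal.mp hab
  dsimp only
  rw [PowerSeries.coeff_X_pow, if_neg (by omega), zero_mul]

lemma dvd_eval₂_of_low (N : ℕ) (v : PowerSeries R) (hv : (PowerSeries.X : R⟦X⟧) ∣ v)
    (q : Polynomial R) (h : ∀ i < N, q.coeff i = 0) :
    (PowerSeries.X : R⟦X⟧) ^ N ∣ q.eval₂ (PowerSeries.C) v := by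
  rw [Polynomial.eval₂_eq_sum, Polynomial.sum]
  apply Finset.dvd_sum
  intro i hi
  have hiN : N ≤ i := by
    by_contra hlt
    exact (Polynomial.mem_support_iff.mp hi) (h i (by omega))
  exact Dvd.dvd.mul_left ((pow_dvd_pow _ hiN).trans (pow_dvd_pow_of_dvd hv i)) _

lemma mk_eval₂_trunc (N : ℕ) (v : PowerSeries R) (hv : (PowerSeries.X : R⟦X⟧) ∣ v)
    (p : Polynomial R) :
    Ideal.Quotient.mk (Ideal.span {(PowerSeries.X : R⟦X⟧) ^ N})
        ((PowerSeries.trunc N (p : R⟦X⟧)).eval₂ (PowerSeries.C) v)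
      = Ideal.Quotient.mk _ (p.eval₂ (PowerSeries.C) v) := by
  rw [Ideal.Quotient.eq, Ideal.mem_span_singleton]
  have : (PowerSeries.trunc N (p : R⟦X⟧)).eval₂ (PowerSeries.C) v - p.eval₂ (PowerSeries.C) v
      = (PowerSeries.trunc N (p : R⟦X⟧) - p).eval₂ (PowerSeries.C) v := by
    rw [Polynomial.eval₂_sub]
  rw [this]
  apply dvd_eval₂_of_low N v hv
  intro i hi
  rw [Polynomial.coeff_sub, PowerSeries.coeff_trunc, if_pos hi, Polynomial.coeff_coe, sub_self]

/-- Evaluation of a power series at `v` (with `X ∣ v`), well-defined modulo `X^N`,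
as a ring homomorphism to the quotient. -/
noncomputable def evalMod (v : PowerSeries R) (hv : (PowerSeries.X : R⟦X⟧) ∣ v) (N : ℕ) :
    R⟦X⟧ →+* R⟦X⟧ ⧸ Ideal.span {(PowerSeries.X : R⟦X⟧) ^ N} where
  toFun f := Ideal.Quotient.mk _ ((PowerSeries.trunc N f).eval₂ (PowerSeries.C) v)
  map_one' := by
    show Ideal.Quotient.mk _ ((PowerSeries.trunc N (1 : R⟦X⟧)).eval₂ (PowerSeries.C) v) = 1
    have h1 : ((1 : R⟦X⟧)) = ((1 : Polynomial R) : R⟦X⟧) := by simp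
    rw [h1, mk_eval₂_trunc N v hv 1, Polynomial.eval₂_one, map_one]
  map_mul' f g := by
    show Ideal.Quotient.mk _ ((PowerSeries.trunc N (f * g)).eval₂ (PowerSeries.C) v) = _
    have key : PowerSeries.trunc N (f * g) =
        PowerSeries.trunc N ((↑(PowerSeries.trunc N f * PowerSeries.trunc N g) : R⟦X⟧)) := by
      rw [Polynomial.coe_mul, PowerSeries.trunc_trunc_mul_trunc]
    rw [key, mk_eval₂_trunc N v hv, Polynomial.eval₂_mul, map_mul]
  map_zero' := by simp
  map_add' f g := by
    show Ideal.Quotient.mk _ ((PowerSeries.trunc N (f + g)).eval₂ (PowerSeries.C) v) = _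
    rw [map_add, Polynomial.eval₂_add, map_add]

lemma evalMod_apply (v : PowerSeries R) (hv : (PowerSeries.X : R⟦X⟧) ∣ v) (N : ℕ) (f : R⟦X⟧) :
    evalMod v hv N f = Ideal.Quotient.mk _ ((PowerSeries.trunc N f).eval₂ (PowerSeries.C) v) :=
  rfl

lemma evalMod_poly (v : PowerSeries R) (hv : (PowerSeries.X : R⟦X⟧) ∣ v) (N : ℕ) (p : Polynomial R) :
    evalMod v hv N (p : R⟦X⟧) = Ideal.Quotient.mk _ (p.eval₂ (PowerSeries.C) v) :=
  mk_eval₂_trunc N v hv p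

lemma evalMod_C (v : PowerSeries R) (hv : (PowerSeries.X : R⟦X⟧) ∣ v) (N : ℕ) (r : R) :
    evalMod v hv N (PowerSeries.C r) = Ideal.Quotient.mk _ (PowerSeries.C r) := by
  have h := evalMod_poly v hv N (Polynomial.C r)
  rw [Polynomial.eval₂_C] at h
  simpa [Polynomial.coe_C] using h

lemma evalMod_X (v : PowerSeries R) (hv : (PowerSeries.X : R⟦X⟧) ∣ v) (N : ℕ) :
    evalMod v hv N PowerSeries.X = Ideal.Quotient.mk _ v := by
  have h := evalMod_poly v hv N Polynomial.X
  rw [Polynomial.eval₂_X] at h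
  simpa [Polynomial.coe_X] using h

end Helpers

set_option maxHeartbeats 1000000 in
set_option synthInstance.maxHeartbeats 400000 in
/-- Lagrange inversion for the `k`-butterfly: if `v` is the formal power series in `z`
with zero constant term satisfying `z = v(1-r₁v)⋯(1-r_kv)`, and `F` is the formal power
series `1/(1-r_k v)` (in `z`), then
`(n-1)[z^{n-1}] F = [v^{n-2}] r_k ∏_{h<k-1}(1-r_h v)^{-(n-1)} (1-r_k v)^{-(n+1)}`. -/
theorem lagrange_inversion_butterfly (k n : ℕ) (hk : 1 ≤ k) (hn : 2 ≤ n)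
    (v F : PowerSeries (MvPolynomial (Fin k) ℚ))
    (hv0 : constantCoeff v = 0)
    (hv : v * ∏ i : Fin k, (1 - C (MvPolynomial.X i) * v) = X)
    (hF : F * (1 - C (MvPolynomial.X ⟨k - 1, by omega⟩) * v) = 1) :
    ((n : MvPolynomial (Fin k) ℚ) - 1) * PowerSeries.coeff (n - 1) F
      = PowerSeries.coeff (n - 2)
          (C (MvPolynomial.X ⟨k - 1, by omega⟩) *
            ∏ i : Fin k,
              invPow (MvPolynomial.X i) (if (i : ℕ) = k - 1 then n + 1 else n - 1)) := by
  obtain ⟨m, rfl⟩ : ∃ m, n = m + 2 := ⟨n - 2, by omega⟩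
  have h21 : m + 2 - 1 = m + 1 := rfl
  have h22 : m + 2 - 2 = m := rfl
  rw [h21, h22]
  set idx : Fin k := ⟨k - 1, by omega⟩ with hidx
  set rk : MvPolynomial (Fin k) ℚ := MvPolynomial.X idx with hrk
  set P := ∏ i : Fin k, (1 - C (MvPolynomial.X i) * v) with hP
  set G := (C (R := MvPolynomial (Fin k) ℚ)) rk *
      ∏ i : Fin k, invPow (MvPolynomial.X i) (if (i : ℕ) = k - 1 then m + 2 + 1 else m + 1)
    with hG
  -- basic structure: v = X * u with u * P = 1
  have hXv : (X : (MvPolynomial (Fin k) ℚ)⟦X⟧) ∣ v := X_dvd_iff.mpr hv0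
  obtain ⟨u, huv⟩ := hXv
  have hXv : (X : (MvPolynomial (Fin k) ℚ)⟦X⟧) ∣ v := ⟨u, huv⟩
  have hXne : (X : (MvPolynomial (Fin k) ℚ)⟦X⟧) ≠ 0 := X_ne_zero
  have huP : u * P = 1 := by
    apply mul_left_cancel₀ hXne
    rw [mul_one, ← mul_assoc, ← huv, hv]
  have hPc : constantCoeff P = 1 := by
    rw [hP, map_prod]
    apply Finset.prod_eq_one
    intro i _
    simp [hv0]
  have hu0 : constantCoeff u = 1 := by
    have := congrArg ((constantCoeff (R := MvPolynomial (Fin k) ℚ))) huP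
    simpa [hPc] using this
  -- derivative facts
  have hDv : d⁄dX (MvPolynomial (Fin k) ℚ) v = u + X * d⁄dX (MvPolynomial (Fin k) ℚ) u := by
    rw [huv, Derivation.leibniz, smul_eq_mul, smul_eq_mul, derivative_X, mul_one]
    ring
  have hDuP : u * d⁄dX (MvPolynomial (Fin k) ℚ) P + P * d⁄dX (MvPolynomial (Fin k) ℚ) u = 0 := by
    have h0 := congrArg (d⁄dX (MvPolynomial (Fin k) ℚ)) huP
    rwa [Derivation.leibniz, smul_eq_mul, smul_eq_mul, Derivation.map_one_eq_zero] at h0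
  -- key residue computation, b ≥ 1 case
  have hB1 : ∀ c : ℕ,
      PowerSeries.coeff (c + 1) (P ^ (c + 2) * d⁄dX (MvPolynomial (Fin k) ℚ) v) = 0 := by
    intro c
    have hflip : P ^ c * d⁄dX (MvPolynomial (Fin k) ℚ) P = -(P ^ (c + 2) * d⁄dX (MvPolynomial (Fin k) ℚ) u) := by
      calc P ^ c * d⁄dX (MvPolynomial (Fin k) ℚ) P
          = ((u * d⁄dX (MvPolynomial (Fin k) ℚ) P) * u) * P ^ (c + 2) := by
            have : P ^ c * d⁄dX (MvPolynomial (Fin k) ℚ) P = (P ^ c * d⁄dX (MvPolynomial (Fin k) ℚ) P) * ((u * P) * (u * P)) := by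
              rw [huP]; ring
            rw [this]; ring
        _ = ((-(P * d⁄dX (MvPolynomial (Fin k) ℚ) u)) * u) * P ^ (c + 2) := by
            rw [show u * d⁄dX (MvPolynomial (Fin k) ℚ) P = -(P * d⁄dX (MvPolynomial (Fin k) ℚ) u) by linear_combination hDuP]
        _ = -(P ^ (c + 2) * d⁄dX (MvPolynomial (Fin k) ℚ) u) * (u * P) := by ring
        _ = -(P ^ (c + 2) * d⁄dX (MvPolynomial (Fin k) ℚ) u) := by rw [huP, mul_one]
    have hup : P ^ (c + 2) * u = P ^ (c + 1) := by
      calc P ^ (c + 2) * u = P ^ (c + 1) * (u * P) := by ring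
        _ = P ^ (c + 1) := by rw [huP, mul_one]
    have hDPb : d⁄dX (MvPolynomial (Fin k) ℚ) (P ^ (c + 1)) =
        ((c + 1 : ℕ) : (MvPolynomial (Fin k) ℚ)⟦X⟧) * (P ^ c * d⁄dX (MvPolynomial (Fin k) ℚ) P) := by
      rw [Derivation.leibniz_pow, smul_eq_mul, nsmul_eq_mul]
      norm_num
    have key : ((c + 1 : ℕ) : (MvPolynomial (Fin k) ℚ)⟦X⟧) * (P ^ (c + 2) * d⁄dX (MvPolynomial (Fin k) ℚ) v)
        = ((c + 1 : ℕ) : (MvPolynomial (Fin k) ℚ)⟦X⟧) * P ^ (c + 1)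
          - X * d⁄dX (MvPolynomial (Fin k) ℚ) (P ^ (c + 1)) := by
      rw [hDv, hDPb]
      linear_combination ((c + 1 : ℕ) : (MvPolynomial (Fin k) ℚ)⟦X⟧) * hup
        + (((c + 1 : ℕ) : (MvPolynomial (Fin k) ℚ)⟦X⟧) * X) * hflip
    have hco := congrArg (PowerSeries.coeff (c + 1)) key
    rw [map_sub, ← map_natCast ((C (R := MvPolynomial (Fin k) ℚ))) (c + 1), coeff_C_mul, coeff_C_mul,
      coeff_succ_X_mul, coeff_derivative] at hco
    have hzero : ((c + 1 : ℕ) : MvPolynomial (Fin k) ℚ) *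
        PowerSeries.coeff (c + 1) (P ^ (c + 2) * d⁄dX (MvPolynomial (Fin k) ℚ) v) = 0 := by
      rw [hco]
      push_cast
      ring
    have hne : ((c + 1 : ℕ) : MvPolynomial (Fin k) ℚ) ≠ 0 :=
      Nat.cast_ne_zero.mpr (by omega)
    exact (mul_eq_zero.mp hzero).resolve_left hne
  -- b = 0 case
  have hB0 : PowerSeries.coeff 0 (P ^ 1 * d⁄dX (MvPolynomial (Fin k) ℚ) v) = 1 := by
    rw [pow_one, coeff_zero_eq_constantCoeff, map_mul, hPc, one_mul, ←
      coeff_zero_eq_constantCoeff, coeff_derivative, zero_add, huv, coeff_succ_X_mul,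
      coeff_zero_eq_constantCoeff, hu0]
    norm_num
  -- full residue lemma
  have hB : ∀ a, a ≤ m →
      PowerSeries.coeff m (v ^ a * (P ^ (m + 1) * d⁄dX (MvPolynomial (Fin k) ℚ) v)) = if a = m then 1 else 0 := by
    intro a ha
    have hsplit : v ^ a * (P ^ (m + 1) * d⁄dX (MvPolynomial (Fin k) ℚ) v)
        = X ^ a * (P ^ ((m - a) + 1) * d⁄dX (MvPolynomial (Fin k) ℚ) v) := by
      have hpow : P ^ (m + 1) = P ^ a * P ^ ((m - a) + 1) := by
        rw [← pow_add]; congr 1; omega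
      have h1 : u ^ a * P ^ a = 1 := by rw [← mul_pow, huP, one_pow]
      calc v ^ a * (P ^ (m + 1) * d⁄dX (MvPolynomial (Fin k) ℚ) v)
          = (u ^ a * P ^ a) * (X ^ a * (P ^ ((m - a) + 1) * d⁄dX (MvPolynomial (Fin k) ℚ) v)) := by
            rw [huv, mul_pow, hpow]; ring
        _ = X ^ a * (P ^ ((m - a) + 1) * d⁄dX (MvPolynomial (Fin k) ℚ) v) := by rw [h1, one_mul]
    have hXp := PowerSeries.coeff_X_pow_mul
      (P ^ ((m - a) + 1) * d⁄dX (MvPolynomial (Fin k) ℚ) v) a (m - a)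
    rw [show (m - a) + a = m from by omega] at hXp
    rw [hsplit, hXp]
    by_cases ham : a = m
    · rw [if_pos ham, ham, Nat.sub_self]
      exact hB0
    · rw [if_neg ham]
      obtain ⟨c, hc⟩ : ∃ c, m - a = c + 1 := ⟨m - a - 1, by omega⟩
      rw [hc, show c + 1 + 1 = c + 2 from rfl]
      exact hB1 c
  -- derivative of F
  have hDF : d⁄dX (MvPolynomial (Fin k) ℚ) F = F ^ 2 * C rk * d⁄dX (MvPolynomial (Fin k) ℚ) v := by
    have h0 := congrArg (d⁄dX (MvPolynomial (Fin k) ℚ)) hF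
    rw [Derivation.leibniz, smul_eq_mul, smul_eq_mul, Derivation.map_one_eq_zero, map_sub,
      Derivation.map_one_eq_zero, Derivation.leibniz, smul_eq_mul, smul_eq_mul, derivative_C,
      mul_zero, add_zero] at h0
    -- h0 : F * (0 - C rk * Dv) + (1 - C rk * v) * DF = 0
    calc d⁄dX (MvPolynomial (Fin k) ℚ) F = (F * (1 - C rk * v)) * d⁄dX (MvPolynomial (Fin k) ℚ) F := by rw [hF, one_mul]
      _ = F * ((1 - C rk * v) * d⁄dX (MvPolynomial (Fin k) ℚ) F) := by ring
      _ = F * (F * (C rk * d⁄dX (MvPolynomial (Fin k) ℚ) v)) := by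
          rw [show (1 - C rk * v) * d⁄dX (MvPolynomial (Fin k) ℚ) F = F * (C rk * d⁄dX (MvPolynomial (Fin k) ℚ) v) by
            linear_combination h0]
      _ = F ^ 2 * C rk * d⁄dX (MvPolynomial (Fin k) ℚ) v := by ring
  -- the finite products
  set Qt := ∏ i : Fin k,
      (1 - (C (R := MvPolynomial (Fin k) ℚ)) (MvPolynomial.X i) * X) ^
        (if (i : ℕ) = k - 1 then m + 2 + 1 else m + 1) with hQt
  set Qv := ∏ i : Fin k,
      (1 - (C (R := MvPolynomial (Fin k) ℚ)) (MvPolynomial.X i) * v) ^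
        (if (i : ℕ) = k - 1 then m + 2 + 1 else m + 1) with hQv
  have hGQt : G * Qt = C rk := by
    rw [hG, hQt, mul_assoc, ← Finset.prod_mul_distrib]
    rw [Finset.prod_congr rfl fun i _ =>
      invPow_mul_pow (MvPolynomial.X i) _ (by split <;> omega)]
    rw [Finset.prod_const_one, mul_one]
  have hQv_split : Qv = P ^ (m + 1) * (1 - C rk * v) ^ 2 := by
    rw [hQv]
    have hfac : ∀ i : Fin k,
        (1 - (C (R := MvPolynomial (Fin k) ℚ)) (MvPolynomial.X i) * v) ^
            (if (i : ℕ) = k - 1 then m + 2 + 1 else m + 1)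
          = (1 - C (MvPolynomial.X i) * v) ^ (m + 1) *
              (if i = idx then (1 - C (MvPolynomial.X i) * v) ^ 2 else 1) := by
      intro i
      by_cases hi : i = idx
      · have : (i : ℕ) = k - 1 := by rw [hi]
        rw [if_pos this, if_pos hi, show m + 2 + 1 = (m + 1) + 2 by omega, pow_add]
      · have : ¬((i : ℕ) = k - 1) := fun h => hi (Fin.ext h)
        rw [if_neg this, if_neg hi, mul_one]
    rw [Finset.prod_congr rfl fun i _ => hfac i, Finset.prod_mul_distrib,
      Finset.prod_ite_eq' Finset.univ idx, if_pos (Finset.mem_univ idx), Finset.prod_pow, ← hP,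
      hidx]
  have hQvc : constantCoeff Qv = 1 := by
    rw [hQv, map_prod]
    apply Finset.prod_eq_one
    intro i _
    split <;> simp [hv0]
  set J := invOfUnit Qv 1 with hJdef
  have hJ : Qv * J = 1 := mul_invOfUnit Qv 1 (by rw [hQvc]; rfl)
  have hFQv : F ^ 2 * Qv = P ^ (m + 1) := by
    rw [hQv_split]
    calc F ^ 2 * (P ^ (m + 1) * (1 - C rk * v) ^ 2)
        = (F * (1 - C rk * v)) ^ 2 * P ^ (m + 1) := by ring
      _ = P ^ (m + 1) := by rw [hF, one_pow, one_mul]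
  -- evaluation mod X^(m+1)
  set E := (PowerSeries.trunc (m + 1) G).eval₂ ((C (R := MvPolynomial (Fin k) ℚ))) v with hE
  have hΦQt : evalMod v hXv (m + 1) Qt = Ideal.Quotient.mk _ Qv := by
    rw [hQt, map_prod, hQv, map_prod]
    apply Finset.prod_congr rfl
    intro i _
    simp only [map_pow, map_sub, map_one, map_mul, evalMod_C, evalMod_X]
  have hmk : Ideal.Quotient.mk (Ideal.span {(X : (MvPolynomial (Fin k) ℚ)⟦X⟧) ^ (m + 1)})
      (C rk) = Ideal.Quotient.mk _ (E * Qv) := by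
    calc Ideal.Quotient.mk _ (C rk) = evalMod v hXv (m + 1) (C rk) :=
          (evalMod_C v hXv (m + 1) rk).symm
      _ = evalMod v hXv (m + 1) (G * Qt) := by rw [hGQt]
      _ = evalMod v hXv (m + 1) G * evalMod v hXv (m + 1) Qt := map_mul _ _ _
      _ = Ideal.Quotient.mk _ E * Ideal.Quotient.mk _ Qv := by
          rw [evalMod_apply, ← hE, hΦQt]
      _ = Ideal.Quotient.mk _ (E * Qv) := (map_mul _ _ _).symm
  have hdvd : (X : (MvPolynomial (Fin k) ℚ)⟦X⟧) ^ (m + 1) ∣ C rk - E * Qv := by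
    rw [← Ideal.mem_span_singleton, ← Ideal.Quotient.eq]
    exact hmk
  obtain ⟨T0, hT0⟩ := hdvd
  have hkey : F ^ 2 * C rk = E * P ^ (m + 1) + X ^ (m + 1) * (T0 * (P ^ (m + 1) * J)) := by
    linear_combination (C rk * J) * hFQv + (P ^ (m + 1) * J) * hT0
      + (E * P ^ (m + 1) - F ^ 2 * C rk) * hJ
  -- final assembly
  have hLHS : ((↑(m + 2) : MvPolynomial (Fin k) ℚ) - 1) * PowerSeries.coeff (m + 1) F
      = PowerSeries.coeff m (d⁄dX (MvPolynomial (Fin k) ℚ) F) := by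
    rw [coeff_derivative]
    push_cast
    ring
  rw [hLHS, hDF]
  have hre : F ^ 2 * C rk * d⁄dX (MvPolynomial (Fin k) ℚ) v
      = E * (P ^ (m + 1) * d⁄dX (MvPolynomial (Fin k) ℚ) v)
        + X ^ (m + 1) * (T0 * (P ^ (m + 1) * J) * d⁄dX (MvPolynomial (Fin k) ℚ) v) := by
    rw [show F ^ 2 * C rk * d⁄dX (MvPolynomial (Fin k) ℚ) v = (F ^ 2 * C rk) * d⁄dX (MvPolynomial (Fin k) ℚ) v by ring, hkey]
    ring
  rw [hre, map_add, coeff_X_pow_mul_zero _ _ _ (by omega), add_zero]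
  rw [hE, eval₂_trunc_eq_sum_range, Finset.sum_mul, map_sum]
  have hterm : ∀ i ∈ Finset.range (m + 1),
      PowerSeries.coeff m
          ((C (R := MvPolynomial (Fin k) ℚ)) (PowerSeries.coeff i G) * v ^ i *
            (P ^ (m + 1) * d⁄dX (MvPolynomial (Fin k) ℚ) v))
        = if i = m then PowerSeries.coeff m G else 0 := by
    intro i hi
    rw [mul_assoc, coeff_C_mul, hB i (by simpa using Nat.lt_succ_iff.mp (Finset.mem_range.mp hi))]
    by_cases him : i = m
    · rw [if_pos him, if_pos him, mul_one, him]
    · rw [if_neg him, if_neg him, mul_zero]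
  rw [Finset.sum_congr rfl hterm, Finset.sum_ite_eq' (Finset.range (m + 1)) m]
  rw [if_pos (Finset.mem_range.mpr (by omega))]
end

section
/- For k ≥ 1, 0 ≤ t < k, N ≥ 1, and nonnegative integers a_1,...,a_k with a_1+⋯+a_k = N, the number ((a_{k-t}+⋯+a_k)/(N(N+1))) · ∏_{h=1}^{k-t-1} C(N-1+a_h, a_h) · ∏_{ℓ=k-t}^{k} C(N+a_ℓ, a_ℓ) is a nonnegative integer; equivalently, N(N+1) divides (a_{k-t}+⋯+a_k) · ∏_{h=1}^{k-t-1} C(N-1+a_h, a_h) · ∏_{ℓ=k-t}^{k} C(N+a_ℓ, a_ℓ). -/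
lemma lemA_s11 (N a : ℕ) : (N + 1) ∣ a * Nat.choose (N + a) a := by
  cases a with
  | zero => simp
  | succ b =>
    have h := Nat.choose_succ_right_eq (N + (b + 1)) b
    have h2 : N + (b + 1) - b = N + 1 := by omega
    rw [h2] at h
    exact ⟨Nat.choose (N + (b + 1)) b, by rw [mul_comm, h, mul_comm]⟩

lemma lemB (N a : ℕ) (hN : 1 ≤ N) : N ∣ a * Nat.choose (N - 1 + a) a := by
  cases a with
  | zero => simp
  | succ b =>
    have h := Nat.choose_succ_right_eq (N - 1 + (b + 1)) b
    have h2 : N - 1 + (b + 1) - b = N := by omega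
    rw [h2] at h
    exact ⟨Nat.choose (N - 1 + (b + 1)) b, by rw [mul_comm, h, mul_comm]⟩

/-- Theorem 6 of Heuberger–Selkirk–Wagner: for `k ≥ 1`, `0 ≤ t < k`, `N ≥ 1` and
`a₁+⋯+a_k = N`, the quantity
`((a_{k-t}+⋯+a_k)/(N(N+1))) ∏_{h=1}^{k-t-1} C(N-1+a_h,a_h) ∏_{ℓ=k-t}^{k} C(N+a_ℓ,a_ℓ)`
is a nonnegative integer, i.e. `N(N+1)` divides the displayed product.
Here index `i : Fin k` stands for the subscript `i+1`. -/
theorem HSW_integral (k t N : ℕ) (hk : 1 ≤ k) (ht : t < k) (hN : 1 ≤ N)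
    (a : Fin k → ℕ) (ha : ∑ i, a i = N) :
    N * (N + 1) ∣
      (∑ i ∈ Finset.univ.filter (fun i : Fin k => k - t ≤ (i : ℕ) + 1), a i) *
        ((∏ i ∈ Finset.univ.filter (fun i : Fin k => (i : ℕ) + 1 < k - t),
            Nat.choose (N - 1 + a i) (a i)) *
          ∏ i ∈ Finset.univ.filter (fun i : Fin k => k - t ≤ (i : ℕ) + 1),
            Nat.choose (N + a i) (a i)) := by
  set S := Finset.univ.filter (fun i : Fin k => k - t ≤ (i : ℕ) + 1) with hS
  set T := Finset.univ.filter (fun i : Fin k => (i : ℕ) + 1 < k - t) with hT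
  set PS := ∏ i ∈ S, Nat.choose (N + a i) (a i) with hPS
  set PT := ∏ i ∈ T, Nat.choose (N - 1 + a i) (a i) with hPT
  have hpart : (∑ i ∈ T, a i) + (∑ i ∈ S, a i) = N := by
    have hfil : Finset.filter (fun i : Fin k => ¬ ((i : ℕ) + 1 < k - t)) Finset.univ = S := by
      rw [hS]
      apply Finset.filter_congr
      intro i _
      simp [not_lt]
    have h := Finset.sum_filter_add_sum_filter_not (Finset.univ : Finset (Fin k))
      (fun i : Fin k => (i : ℕ) + 1 < k - t) a
    rw [hfil, ha] at h
    exact h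
  have h1 : (N + 1) ∣ (∑ i ∈ S, a i) * PS := by
    rw [Finset.sum_mul]
    apply Finset.dvd_sum
    intro i hi
    rw [hPS, ← Finset.mul_prod_erase S _ hi, ← mul_assoc]
    exact Dvd.dvd.mul_right (lemA_s11 N (a i)) _
  have h2 : N ∣ (∑ i ∈ T, a i) * PT := by
    rw [Finset.sum_mul]
    apply Finset.dvd_sum
    intro i hi
    rw [hPT, ← Finset.mul_prod_erase T _ hi, ← mul_assoc]
    exact Dvd.dvd.mul_right (lemB N (a i) hN) _
  have hdvd1 : (N + 1) ∣ (∑ i ∈ S, a i) * (PT * PS) := by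
    have : (∑ i ∈ S, a i) * (PT * PS) = PT * ((∑ i ∈ S, a i) * PS) := by ring
    rw [this]
    exact h1.mul_left PT
  have hdvd2 : N ∣ (∑ i ∈ S, a i) * (PT * PS) := by
    have hsub : (∑ i ∈ S, a i) = N - (∑ i ∈ T, a i) := by omega
    rw [hsub, Nat.sub_mul]
    apply Nat.dvd_sub
    · exact Dvd.dvd.mul_right (dvd_refl N) _
    · have : (∑ i ∈ T, a i) * (PT * PS) = ((∑ i ∈ T, a i) * PT) * PS := by ring
      rw [this]
      exact h2.mul_right PS
  exact (show Nat.Coprime N (N+1) by simp [Nat.Coprime, Nat.gcd_comm]).mul_dvd_of_dvd_of_dvd hdvd2 hdvd1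
end
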